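/- arXiv:1806.10212 — 12 statements merged into one kernel-verified Lean document; each statement's English description precedes it below -/
import Mathlib

section
/- Let R be a semiprime ring with unity, a a regular element of R, and b ∈ R. Then the set b·I(a)·b = {b·x·b : x ∈ I(a)} is a singleton if and only if b ∈ R·a ∩ a·R. -/
theorem bIb_singleton_iff {R : Type*} [Ring R]
    (hsp : ∀ x : R, (∀ r : R, x * r * x = 0) → x = 0)
    (a : R) (ha : ∃ x : R, a * x * a = a) (b : R) :
    (∃ c : R, {z : R | ∃ x : R, a * x * a = a ∧ z = b * x * b} = {c}) ↔
      (∃ u : R, b = u * a) ∧ (∃ v : R, b = a * v) := by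
  obtain ⟨x₀, hx₀⟩ := ha
  have h1 : a * (1 - x₀ * a) = 0 := by
    rw [mul_sub, mul_one, ← mul_assoc, hx₀, sub_self]
  have h2 : (1 - a * x₀) * a = 0 := by
    rw [sub_mul, one_mul, mul_assoc, ← mul_assoc, hx₀, sub_self]
  constructor
  · rintro ⟨c, hc⟩
    have hmem : ∀ x : R, a * x * a = a → b * x * b = c := by
      intro x hx
      have : (b * x * b) ∈ ({c} : Set R) := hc ▸ ⟨x, hx, rfl⟩
      simpa using this
    have hc0 : b * x₀ * b = c := hmem x₀ hx₀
    constructor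
    · -- left: b ∈ R a
      have key : ∀ s : R, b * (1 - x₀ * a) * s * b = 0 := by
        intro s
        have hinv : a * (x₀ + (1 - x₀ * a) * s) * a = a := by
          rw [mul_add, add_mul, hx₀, ← mul_assoc a, h1, zero_mul, zero_mul, add_zero]
        have := hmem _ hinv
        rw [mul_add, add_mul, hc0] at this
        have h0 : b * ((1 - x₀ * a) * s) * b = 0 := by
          have := congrArg (· - c) this
          simpa using this
        rw [← mul_assoc] at h0
        exact h0
      set t := b * (1 - x₀ * a) with ht
      have htz : t = 0 := by
        apply hsp
        intro r
        have : t * r * t = (t * r * b) * (1 - x₀ * a) := by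
          rw [ht]; noncomm_ring
        rw [this, key r, zero_mul]
      have : b - b * x₀ * a = 0 := by
        rw [ht] at htz
        rw [mul_sub, mul_one, ← mul_assoc] at htz
        exact htz
      exact ⟨b * x₀, sub_eq_zero.mp this⟩
    · -- right: b ∈ a R
      have key : ∀ s : R, b * s * ((1 - a * x₀) * b) = 0 := by
        intro s
        have hinv : a * (x₀ + s * (1 - a * x₀)) * a = a := by
          rw [mul_add, add_mul, hx₀, mul_assoc, mul_assoc, h2, mul_zero,
            mul_zero, add_zero]
        have := hmem _ hinv
        rw [mul_add, add_mul, hc0] at this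
        have h0 : b * (s * (1 - a * x₀)) * b = 0 := by
          have := congrArg (· - c) this
          simpa using this
        calc b * s * ((1 - a * x₀) * b) = b * (s * (1 - a * x₀)) * b := by noncomm_ring
          _ = 0 := h0
      set w := (1 - a * x₀) * b with hw
      have hwz : w = 0 := by
        apply hsp
        intro r
        have : w * r * w = (1 - a * x₀) * (b * r * w) := by
          rw [hw]; noncomm_ring
        rw [this, key r, mul_zero]
      have : b - a * (x₀ * b) = 0 := by
        rw [hw, sub_mul, one_mul, mul_assoc] at hwz
        exact hwz
      exact ⟨x₀ * b, sub_eq_zero.mp this⟩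
  · rintro ⟨⟨u, hu⟩, ⟨v, hv⟩⟩
    refine ⟨b * x₀ * b, ?_⟩
    ext z
    simp only [Set.mem_setOf_eq, Set.mem_singleton_iff]
    constructor
    · rintro ⟨x, hx, rfl⟩
      have e : ∀ y : R, a * y * a = a → b * y * b = u * a * v := by
        intro y hy
        calc b * y * b = u * a * y * (a * v) := by nth_rw 1 [hu]; nth_rw 1 [hv]
          _ = u * (a * y * a) * v := by noncomm_ring
          _ = u * a * v := by rw [hy]
      rw [e x hx, e x₀ hx₀]
    · rintro rfl
      exact ⟨x₀, hx₀, rfl⟩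
end

section
/- Let R be a semiprime ring with unity, a a regular element, b ∈ R·a ∩ a·R. Then for all x, y ∈ I(a), b·x·b = b·y·b. -/
theorem bIb_constant {R : Type*} [Ring R]
    (hsp : ∀ x : R, (∀ r : R, x * r * x = 0) → x = 0)
    (a b : R) (ha : ∃ x : R, a * x * a = a)
    (hb : (∃ u : R, b = u * a) ∧ (∃ v : R, b = a * v)) :
    ∀ x y : R, a * x * a = a → a * y * a = a → b * x * b = b * y * b := by
  obtain ⟨⟨u, hu⟩, ⟨v, hv⟩⟩ := hb
  intro x y hx hy
  have key : ∀ z : R, a * z * a = a → b * z * b = u * a * v := by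
    intro z hz
    calc b * z * b = u * (a * z * a) * v := by nth_rewrite 2 [hv]; nth_rewrite 1 [hu]; noncomm_ring
    _ = u * a * v := by rw [hz]
  rw [key x hx, key y hy]
end

section
/- Let R be a ring with unity and b, d ∈ R such that b + d is von Neumann regular. The following are equivalent: (1) b·R + d·R = (b+d)·R and b·R ∩ d·R = 0; (2) R·b + R·d = R·(b+d) and R·b ∩ R·d = 0; (3) b·R ∩ d·R = 0 and R·b ∩ R·d = 0. -/
/-! Write `c = b + d` with `c * x * c = c`. An element `a` lies in `c R` iff `c * x * a = a`.
If `R b ∩ R d = 0`, then `(c x - 1) b = (1 - c x) d` (because `(c x - 1) c = 0`) lies in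
`R b ∩ R d`, so `c x` fixes `b` and `d`, and `b R + d R = c R`. Conversely, if `c x` fixes `b`
and `b R ∩ d R = 0`, then `b (1 - x b) = d x b` gives `b x b = b` and `d x b = 0`; right
multiplication by `x b` then fixes `R b` and kills `R d`, so `R b ∩ R d = 0`.
Statement (2) is statement (1) in the opposite ring, and statement (3) is self-dual. -/

open MulOpposite

theorem setOf_inter_setOf_eq_zero_iff {α M : Type*} [Zero α] [Zero M] {f g : α → M}
    (hf : f 0 = 0) (hg : g 0 = 0) :
    {z | ∃ r, z = f r} ∩ {z | ∃ r, z = g r} = {0} ↔ ∀ r s, f r = g s → f r = 0 := by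
  rw [Set.eq_singleton_iff_unique_mem]
  constructor
  · rintro ⟨-, h⟩ r s hrs
    exact h _ ⟨⟨r, rfl⟩, ⟨s, hrs⟩⟩
  · rintro h
    refine ⟨⟨⟨0, hf.symm⟩, ⟨0, hg.symm⟩⟩, ?_⟩
    rintro _ ⟨⟨r, rfl⟩, ⟨s, hrs⟩⟩
    exact h r s hrs

section

variable {R : Type*} [Ring R]

def RightDisjoint (b d : R) : Prop := ∀ r s, b * r = d * s → b * r = 0

def LeftDisjoint (b d : R) : Prop := ∀ r s, r * b = s * d → r * b = 0

theorem inter_eq_zero_iff_rightDisjoint (b d : R) :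
    {z : R | ∃ r, z = b * r} ∩ {z | ∃ r, z = d * r} = {0} ↔ RightDisjoint b d :=
  setOf_inter_setOf_eq_zero_iff (mul_zero b) (mul_zero d)

theorem inter_eq_zero_iff_leftDisjoint (b d : R) :
    {z : R | ∃ r, z = r * b} ∩ {z | ∃ r, z = r * d} = {0} ↔ LeftDisjoint b d :=
  setOf_inter_setOf_eq_zero_iff (zero_mul b) (zero_mul d)

variable {b d x : R}

theorem setOf_mul_add_mul_eq_iff (hx : (b + d) * x * (b + d) = b + d) :
    {z | ∃ r s, z = b * r + d * s} = {z | ∃ r, z = (b + d) * r} ↔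
      (b + d) * x * b = b ∧ (b + d) * x * d = d := by
  constructor
  · intro h
    have absorb : ∀ a ∈ {z | ∃ r s, z = b * r + d * s}, (b + d) * x * a = a := by
      intro a ha
      rw [h] at ha
      obtain ⟨t, rfl⟩ := ha
      rw [← mul_assoc, hx]
    exact ⟨absorb b ⟨1, 0, by simp⟩, absorb d ⟨0, 1, by simp⟩⟩
  · rintro ⟨hb, hd⟩
    ext z
    constructor
    · rintro ⟨r, s, rfl⟩
      refine ⟨x * b * r + x * d * s, ?_⟩
      calc b * r + d * s = (b + d) * x * b * r + (b + d) * x * d * s := by rw [hb, hd]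
        _ = (b + d) * (x * b * r + x * d * s) := by noncomm_ring
    · rintro ⟨r, rfl⟩
      exact ⟨r, r, add_mul b d r⟩

theorem leftDisjoint_of_rightDisjoint (hb : (b + d) * x * b = b)
    (h : RightDisjoint b d) : LeftDisjoint b d := by
  have hrs : b * (1 - x * b) = d * (x * b) := by
    calc b * (1 - x * b) = (b + d) * x * b - b * x * b := by rw [hb]; noncomm_ring
      _ = d * (x * b) := by noncomm_ring
  have hbxb : b * x * b = b := by
    calc b * x * b = b - b * (1 - x * b) := by noncomm_ring
      _ = b := by rw [h _ _ hrs, sub_zero]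
  have hdxb : d * x * b = 0 := by
    calc d * x * b = (b + d) * x * b - b * x * b := by noncomm_ring
      _ = 0 := by rw [hb, hbxb, sub_self]
  intro r s hrs
  calc r * b = r * b * x * b := by rw [mul_assoc, mul_assoc, ← mul_assoc b, hbxb]
    _ = s * (d * x * b) := by rw [hrs]; noncomm_ring
    _ = 0 := by rw [hdxb, mul_zero]

theorem LeftDisjoint.mul_mul_eq_self (hx : (b + d) * x * (b + d) = b + d)
    (h : LeftDisjoint b d) : (b + d) * x * b = b ∧ (b + d) * x * d = d := by
  have hrs : ((b + d) * x - 1) * b = (1 - (b + d) * x) * d := by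
    calc ((b + d) * x - 1) * b = ((b + d) * x * (b + d) - (b + d)) + (1 - (b + d) * x) * d := by
          noncomm_ring
      _ = (1 - (b + d) * x) * d := by rw [hx, sub_self, zero_add]
  have hb := h _ _ hrs
  constructor
  · calc (b + d) * x * b = ((b + d) * x - 1) * b + b := by noncomm_ring
      _ = b := by rw [hb, zero_add]
  · calc (b + d) * x * d = d - (1 - (b + d) * x) * d := by noncomm_ring
      _ = d := by rw [← hrs, hb, sub_zero]

theorem rightDirectSum_iff (hx : (b + d) * x * (b + d) = b + d) :
    ({z | ∃ r s, z = b * r + d * s} = {z | ∃ r, z = (b + d) * r} ∧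
        {z | ∃ r, z = b * r} ∩ {z | ∃ r, z = d * r} = {0}) ↔
      ({z | ∃ r, z = b * r} ∩ {z | ∃ r, z = d * r} = {0} ∧
        {z | ∃ r, z = r * b} ∩ {z | ∃ r, z = r * d} = {0}) := by
  rw [setOf_mul_add_mul_eq_iff hx, inter_eq_zero_iff_rightDisjoint, inter_eq_zero_iff_leftDisjoint]
  constructor
  · rintro ⟨⟨hb, -⟩, h⟩
    exact ⟨h, leftDisjoint_of_rightDisjoint hb h⟩
  · rintro ⟨hR, hL⟩
    exact ⟨hL.mul_mul_eq_self hx, hR⟩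

theorem rightDisjoint_op_iff : RightDisjoint (op b) (op d) ↔ LeftDisjoint b d := by
  simp only [RightDisjoint, LeftDisjoint, op_surjective.forall, ← op_mul, op_inj, op_eq_zero_iff]

theorem leftDisjoint_op_iff : LeftDisjoint (op b) (op d) ↔ RightDisjoint b d := by
  simp only [RightDisjoint, LeftDisjoint, op_surjective.forall, ← op_mul, op_inj, op_eq_zero_iff]

theorem setOf_mul_left_eq_preimage_op (b : R) :
    {z : R | ∃ r, z = r * b} = op ⁻¹' {w | ∃ r, w = op b * r} := by
  ext z; simp [op_surjective.exists, ← op_mul]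

theorem setOf_mul_add_mul_left_eq_preimage_op (b d : R) :
    {z : R | ∃ r s, z = r * b + s * d} = op ⁻¹' {w | ∃ r s, w = op b * r + op d * s} := by
  ext z; simp [op_surjective.exists, ← op_mul, ← op_add]

theorem singleton_zero_eq_preimage_op : ({0} : Set R) = op ⁻¹' {0} := by
  ext z; simp

theorem leftDirectSum_iff_op (b d : R) :
    ({z | ∃ r s, z = r * b + s * d} = {z | ∃ r, z = r * (b + d)} ∧
        {z | ∃ r, z = r * b} ∩ {z | ∃ r, z = r * d} = {0}) ↔
      ({w | ∃ r s, w = op b * r + op d * s} = {w | ∃ r, w = (op b + op d) * r} ∧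
        {w | ∃ r, w = op b * r} ∩ {w | ∃ r, w = op d * r} = {0}) := by
  simp only [setOf_mul_add_mul_left_eq_preimage_op, setOf_mul_left_eq_preimage_op, op_add,
    singleton_zero_eq_preimage_op, ← Set.preimage_inter,
    (Set.preimage_injective.2 op_surjective).eq_iff]

end

theorem jain_prasad {R : Type*} [Ring R] (b d : R)
    (h : ∃ x : R, (b + d) * x * (b + d) = b + d) :
    List.TFAE
      [ ({z : R | ∃ r s : R, z = b * r + d * s} = {z : R | ∃ r : R, z = (b + d) * r} ∧
          {z : R | ∃ r : R, z = b * r} ∩ {z : R | ∃ r : R, z = d * r} = {0}),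
        ({z : R | ∃ r s : R, z = r * b + s * d} = {z : R | ∃ r : R, z = r * (b + d)} ∧
          {z : R | ∃ r : R, z = r * b} ∩ {z : R | ∃ r : R, z = r * d} = {0}),
        ({z : R | ∃ r : R, z = b * r} ∩ {z : R | ∃ r : R, z = d * r} = {0} ∧
          {z : R | ∃ r : R, z = r * b} ∩ {z : R | ∃ r : R, z = r * d} = {0}) ] := by
  obtain ⟨x, hx⟩ := h
  have hx_op : (op b + op d) * op x * (op b + op d) = op b + op d := by
    simp only [← op_add, ← op_mul, ← mul_assoc, hx]
  tfae_have 1 ↔ 3 := rightDirectSum_iff hx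
  tfae_have 2 ↔ 3 := by
    rw [leftDirectSum_iff_op, rightDirectSum_iff hx_op, inter_eq_zero_iff_rightDisjoint,
      inter_eq_zero_iff_leftDisjoint, rightDisjoint_op_iff, leftDisjoint_op_iff,
      inter_eq_zero_iff_rightDisjoint, inter_eq_zero_iff_leftDisjoint, and_comm]
  tfae_finish
end

section
/- Let R be a semiprime ring with unity and a, b regular elements of R with I(a) ⊆ I(b). Setting d = a - b, then b·R ∩ d·R = 0 and R·b ∩ R·d = 0. -/
theorem inner_subset_indep {R : Type*} [Ring R]
    (hsp : ∀ x : R, (∀ r : R, x * r * x = 0) → x = 0)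
    (a b : R) (ha : ∃ x : R, a * x * a = a) (hb : ∃ x : R, b * x * b = b)
    (hI : {x : R | a * x * a = a} ⊆ {x : R | b * x * b = b}) :
    {z : R | ∃ r : R, z = b * r} ∩ {z : R | ∃ r : R, z = (a - b) * r} = {0} ∧
    {z : R | ∃ r : R, z = r * b} ∩ {z : R | ∃ r : R, z = r * (a - b)} = {0} := by
  obtain ⟨x, hx⟩ := ha
  have hxb : b * x * b = b := hI hx
  -- family 1 : x + (1 - x*a)*r is an inner inverse of a
  have hfam1 : ∀ r : R, b * ((1 - x * a) * r) * b = 0 := by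
    intro r
    have h1 : a * (x + (1 - x * a) * r) * a = a := by
      have h : a * (x + (1 - x * a) * r) * a
          = a * x * a + (a - a * x * a) * (r * a) := by noncomm_ring
      rw [h, hx, sub_self, zero_mul, add_zero]
    have h2 : b * (x + (1 - x * a) * r) * b = b := hI h1
    have h3 : b * (x + (1 - x * a) * r) * b
        = b * x * b + b * ((1 - x * a) * r) * b := by noncomm_ring
    rw [h3, hxb] at h2
    exact add_eq_left.mp h2
  have hbxa : b * x * a = b := by
    have hz : b * (1 - x * a) = 0 := by
      apply hsp
      intro r
      have h : b * (1 - x * a) * r * (b * (1 - x * a))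
          = (b * ((1 - x * a) * r) * b) * (1 - x * a) := by noncomm_ring
      rw [h, hfam1 r, zero_mul]
    have : b * (1 - x * a) = b - b * x * a := by noncomm_ring
    rw [this, sub_eq_zero] at hz
    exact hz.symm
  -- family 2 : x + r*(1 - a*x)
  have hfam2 : ∀ r : R, b * (r * (1 - a * x)) * b = 0 := by
    intro r
    have h1 : a * (x + r * (1 - a * x)) * a = a := by
      have h : a * (x + r * (1 - a * x)) * a
          = a * x * a + (a * r) * (a - a * x * a) := by noncomm_ring
      rw [h, hx, sub_self, mul_zero, add_zero]
    have h2 : b * (x + r * (1 - a * x)) * b = b := hI h1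
    have h3 : b * (x + r * (1 - a * x)) * b
        = b * x * b + b * (r * (1 - a * x)) * b := by noncomm_ring
    rw [h3, hxb] at h2
    exact add_eq_left.mp h2
  have haxb : a * x * b = b := by
    have hz : (1 - a * x) * b = 0 := by
      apply hsp
      intro r
      have h : (1 - a * x) * b * r * ((1 - a * x) * b)
          = (1 - a * x) * (b * (r * (1 - a * x)) * b) := by noncomm_ring
      rw [h, hfam2 r, mul_zero]
    have : (1 - a * x) * b = b - a * x * b := by noncomm_ring
    rw [this, sub_eq_zero] at hz
    exact hz.symm
  have hdxb : (a - b) * x * b = 0 := by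
    have h : (a - b) * x * b = a * x * b - b * x * b := by noncomm_ring
    rw [h, haxb, hxb, sub_self]
  have hdxd : (a - b) * x * (a - b) = a - b := by
    have h : (a - b) * x * (a - b)
        = a * x * a - a * x * b - b * x * a + b * x * b := by noncomm_ring
    rw [h, hx, haxb, hbxa, hxb]
    abel
  constructor
  · ext z
    simp only [Set.mem_inter_iff, Set.mem_setOf_eq, Set.mem_singleton_iff]
    constructor
    · rintro ⟨⟨r, hr⟩, ⟨s, hs⟩⟩
      have h1 : (a - b) * x * z = 0 := by
        rw [hr, ← mul_assoc, hdxb, zero_mul]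
      have h2 : (a - b) * x * z = z := by
        rw [hs, ← mul_assoc, hdxd]
      rw [h2] at h1; exact h1
    · rintro rfl
      exact ⟨⟨0, by simp⟩, ⟨0, by simp⟩⟩
  · ext z
    simp only [Set.mem_inter_iff, Set.mem_setOf_eq, Set.mem_singleton_iff]
    constructor
    · rintro ⟨⟨r, hr⟩, ⟨s, hs⟩⟩
      have h1 : z * (x * b) = 0 := by
        rw [hs]
        calc s * (a - b) * (x * b) = s * ((a - b) * x * b) := by noncomm_ring
        _ = 0 := by rw [hdxb, mul_zero]
      have h2 : z * (x * b) = z := by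
        rw [hr]
        calc r * b * (x * b) = r * (b * x * b) := by noncomm_ring
        _ = r * b := by rw [hxb]
      rw [h2] at h1; exact h1
    · rintro rfl
      exact ⟨⟨0, by simp⟩, ⟨0, by simp⟩⟩
end

section
/- Let R be a semiprime ring with unity, a, b regular elements with I(a) ⊆ I(b), and d = a - b. Then b·x·d = 0 and d·x·b = 0 for every x ∈ I(a). -/
theorem bxd_zero {R : Type*} [Ring R]
    (hsp : ∀ x : R, (∀ r : R, x * r * x = 0) → x = 0)
    (a b : R) (ha : ∃ x : R, a * x * a = a) (hb : ∃ x : R, b * x * b = b)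
    (hI : {x : R | a * x * a = a} ⊆ {x : R | b * x * b = b}) :
    ∀ x : R, a * x * a = a → b * x * (a - b) = 0 ∧ (a - b) * x * b = 0 := by
  intro x hax
  have hbx : b * x * b = b := hI hax
  have h1 : ∀ r : R, b * ((1 - x*a) * r * x) * b = 0 := by
    intro r
    have mem : a * (x + (1 - x*a) * r * x) * a = a := by
      have e : a * (x + (1 - x*a) * r * x) * a
          = a * x * a + (a - a * x * a) * r * (x * a) := by noncomm_ring
      rw [e, hax]; simp
    have h : b * (x + (1 - x*a) * r * x) * b = b := hI mem
    have e2 : b * (x + (1 - x*a) * r * x) * b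
        = b * x * b + b * ((1 - x*a) * r * x) * b := by noncomm_ring
    rw [e2, hbx] at h
    exact add_eq_left.mp h
  have h2 : ∀ r : R, b * (x * r * (1 - a*x)) * b = 0 := by
    intro r
    have mem : a * (x + x * r * (1 - a*x)) * a = a := by
      have e : a * (x + x * r * (1 - a*x)) * a
          = a * x * a + (a * x) * r * (a - a * x * a) := by noncomm_ring
      rw [e, hax]; simp
    have h : b * (x + x * r * (1 - a*x)) * b = b := hI mem
    have e2 : b * (x + x * r * (1 - a*x)) * b
        = b * x * b + b * (x * r * (1 - a*x)) * b := by noncomm_ring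
    rw [e2, hbx] at h
    exact add_eq_left.mp h
  have hv : x * b * (1 - x*a) = 0 := by
    apply hsp
    intro r
    have e : x * b * (1 - x*a) * r * (x * b * (1 - x*a))
        = x * (b * ((1 - x*a) * r * x) * b) * (1 - x*a) := by noncomm_ring
    rw [e, h1 r]; simp
  have hu : (1 - a*x) * (b * x) = 0 := by
    apply hsp
    intro r
    have e : (1 - a*x) * (b * x) * r * ((1 - a*x) * (b * x))
        = (1 - a*x) * (b * (x * r * (1 - a*x)) * b) * x := by noncomm_ring
    rw [e, h2 r]; simp
  constructor
  · -- b*x*a = b from hv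
    have : b * (x * b * (1 - x*a)) = 0 := by rw [hv]; simp
    have e : b * (x * b * (1 - x*a)) = b * x * b - (b * x * b) * (x * a) := by noncomm_ring
    rw [e, hbx] at this
    have hba : b * (x * a) = b := by rwa [sub_eq_zero, eq_comm] at this
    calc b * x * (a - b) = b * (x * a) - b * x * b := by noncomm_ring
    _ = 0 := by rw [hba, hbx, sub_self]
  · have : (1 - a*x) * (b * x) * b = 0 := by rw [hu]; simp
    have e : (1 - a*x) * (b * x) * b = b * x * b - a * x * (b * x * b) := by noncomm_ring
    rw [e, hbx] at this
    have hab : a * x * b = b := by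
      exact (sub_eq_zero.mp this).symm
    calc (a - b) * x * b = a * x * b - b * x * b := by noncomm_ring
    _ = 0 := by rw [hab, hbx, sub_self]
end

section
/- Let R be a semiprime ring with unity, a, b regular elements with I(a) ⊆ I(b), and d = a - b. Then d·x·d = d for every x ∈ I(a); in particular d is regular. -/
theorem dxd_eq_d {R : Type*} [Ring R]
    (hsp : ∀ x : R, (∀ r : R, x * r * x = 0) → x = 0)
    (a b : R) (ha : ∃ x : R, a * x * a = a) (hb : ∃ x : R, b * x * b = b)
    (hI : {x : R | a * x * a = a} ⊆ {x : R | b * x * b = b}) :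
    (∀ x : R, a * x * a = a → (a - b) * x * (a - b) = a - b) ∧
      (∃ x : R, (a - b) * x * (a - b) = a - b) := by
  have key : ∀ x : R, a * x * a = a → (a - b) * x * (a - b) = a - b := by
    intro x hx
    have hxb : b * x * b = b := hI hx
    have h1 : ∀ r : R, b * (1 - x * a) * (r * b) = 0 := by
      intro r
      have hy : a * (x + (1 - x * a) * r) * a = a := by
        have : a * (x + (1 - x * a) * r) * a = a * x * a + (a - a * x * a) * r * a := by
          noncomm_ring
        rw [this, hx, sub_self, zero_mul, zero_mul, add_zero]
      have hby : b * (x + (1 - x * a) * r) * b = b := hI hy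
      have h2 : b * (1 - x * a) * (r * b) = b * (x + (1 - x * a) * r) * b - b * x * b := by
        noncomm_ring
      rw [hby, hxb, sub_self] at h2
      exact h2
    have hbxa : b * x * a = b := by
      have hu : b * (1 - x * a) = 0 := by
        apply hsp
        intro r
        have : b * (1 - x * a) * r * (b * (1 - x * a)) =
            (b * (1 - x * a) * (r * b)) * (1 - x * a) := by noncomm_ring
        rw [this, h1, zero_mul]
      have h3 : b * (1 - x * a) = b - b * x * a := by noncomm_ring
      rw [h3] at hu
      exact (sub_eq_zero.mp hu).symm
    have h1' : ∀ r : R, b * r * ((1 - a * x) * b) = 0 := by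
      intro r
      have hy : a * (x + r * (1 - a * x)) * a = a := by
        have : a * (x + r * (1 - a * x)) * a = a * x * a + a * r * (a - a * x * a) := by
          noncomm_ring
        rw [this, hx, sub_self, mul_zero, add_zero]
      have hby : b * (x + r * (1 - a * x)) * b = b := hI hy
      have h2 : b * r * ((1 - a * x) * b) = b * (x + r * (1 - a * x)) * b - b * x * b := by
        noncomm_ring
      rw [hby, hxb, sub_self] at h2
      exact h2
    have haxb : a * x * b = b := by
      have hv : (1 - a * x) * b = 0 := by
        apply hsp
        intro r
        have : (1 - a * x) * b * r * ((1 - a * x) * b) =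
            (1 - a * x) * (b * r * ((1 - a * x) * b)) := by noncomm_ring
        rw [this, h1', mul_zero]
      have h3 : (1 - a * x) * b = b - a * x * b := by noncomm_ring
      rw [h3] at hv
      exact (sub_eq_zero.mp hv).symm
    have : (a - b) * x * (a - b) =
        a * x * a - a * x * b - (b * x * a - b * x * b) := by noncomm_ring
    rw [this, hx, hxb, hbxa, haxb]
    abel
  exact ⟨key, ha.imp fun x hx => key x hx⟩
end

section
/- Let R be a semiprime ring with unity and a, b regular elements of R. Then I(a) = I(b) if and only if a = b. -/
theorem inner_inv_determines {R : Type*} [Ring R]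
    (hsp : ∀ x : R, (∀ r : R, x * r * x = 0) → x = 0)
    (a b : R) (ha : ∃ x : R, a * x * a = a) (hb : ∃ x : R, b * x * b = b) :
    {x : R | a * x * a = a} = {x : R | b * x * b = b} ↔ a = b := by
  constructor
  · intro h
    obtain ⟨x, hx⟩ := ha
    have key : ∀ y : R, a * y * a = a → b * y * b = b := by
      intro y hy
      have : y ∈ {x : R | b * x * b = b} := h ▸ hy
      exact this
    have key' : ∀ y : R, b * y * b = b → a * y * a = a := by
      intro y hy
      have : y ∈ {x : R | a * x * a = a} := h.symm ▸ hy
      exact this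
    have hx' : b * x * b = b := key x hx
    -- Step 1 : b * (1 - x*a) * r * b = 0 for all r
    have h1 : ∀ r : R, b * (1 - x * a) * r * b = 0 := by
      intro r
      have hmem : a * (x + (1 - x * a) * r) * a = a := by
        have : a * (x + (1 - x * a) * r) * a
            = a * x * a + (a - a * x * a) * r * a := by noncomm_ring
        rw [this, hx]; noncomm_ring
      have := key _ hmem
      calc b * (1 - x * a) * r * b
          = b * (x + (1 - x * a) * r) * b - b * x * b := by noncomm_ring
        _ = 0 := by rw [this, hx']; simp
    have hb1 : b * (1 - x * a) = 0 := by
      apply hsp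
      intro r
      calc b * (1 - x * a) * r * (b * (1 - x * a))
          = (b * (1 - x * a) * (r * b)) * (1 - x * a) := by noncomm_ring
        _ = 0 := by rw [show b * (1 - x * a) * (r * b) = b * (1 - x * a) * r * b by
              noncomm_ring, h1]; simp
    -- Step 2 : a * r * (1 - b*x) * a = 0 for all r
    have h2 : ∀ r : R, a * (r * (1 - b * x)) * a = 0 := by
      intro r
      have hmem : b * (x + r * (1 - b * x)) * b = b := by
        have : b * (x + r * (1 - b * x)) * b
            = b * x * b + b * r * (b - b * x * b) := by noncomm_ring
        rw [this, hx']; noncomm_ring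
      have := key' _ hmem
      calc a * (r * (1 - b * x)) * a
          = a * (x + r * (1 - b * x)) * a - a * x * a := by noncomm_ring
        _ = 0 := by rw [this, hx]; simp
    have ha1 : (1 - b * x) * a = 0 := by
      apply hsp
      intro r
      calc (1 - b * x) * a * r * ((1 - b * x) * a)
          = (1 - b * x) * (a * (r * (1 - b * x)) * a) := by noncomm_ring
        _ = 0 := by rw [h2]; simp
    have e1 : b = b * x * a := by
      have := sub_eq_zero.mp (by rw [← hb1]; noncomm_ring : b - b * x * a = 0)
      exact this
    have e2 : a = b * x * a := by
      have := sub_eq_zero.mp (by rw [← ha1]; noncomm_ring : a - b * x * a = 0)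
      exact this
    exact e2.trans e1.symm
  · intro h; rw [h]
end

section
/- Let R be a von Neumann regular ring with unity and a, b ∈ R. Then I(a) = I(b) if and only if a = b. -/
theorem inner_inv_determines_vnr {R : Type*} [Ring R]
    (hreg : ∀ a : R, ∃ x : R, a * x * a = a) (a b : R) :
    {x : R | a * x * a = a} = {x : R | b * x * b = b} ↔ a = b := by
  constructor
  · intro h
    have key : ∀ z : R, a * z * a = a ↔ b * z * b = b := fun z => Set.ext_iff.mp h z
    obtain ⟨x, hx⟩ := hreg a
    have hb : b * x * b = b := (key x).mp hx
    -- Step 1: ∀ s, b * s * (1 - a*x) * b = 0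
    have h1 : ∀ s : R, b * s * ((1 : R) - a * x) * b = 0 := by
      intro s
      have mem : a * (x + s * (1 - a * x)) * a = a := by
        have e1 : a * (x + s * (1 - a * x)) * a
            = a * x * a + a * s * (a - a * x * a) := by noncomm_ring
        rw [hx] at e1
        simpa using e1
      have hbmem : b * (x + s * (1 - a * x)) * b = b := (key _).mp mem
      have e2 : b * (x + s * (1 - a * x)) * b
          = b * x * b + b * s * ((1 : R) - a * x) * b := by noncomm_ring
      rw [hbmem, hb] at e2
      exact (left_eq_add.mp e2)
    -- Step 2: b = a*x*b
    have hb_eq : b = a * x * b := by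
      obtain ⟨z, hz⟩ := hreg (((1 : R) - a * x) * b)
      have e3 : ((1 : R) - a * x) * b * z * (((1 : R) - a * x) * b)
          = ((1 : R) - a * x) * (b * z * ((1 : R) - a * x) * b) := by noncomm_ring
      rw [h1 z, mul_zero] at e3
      rw [e3] at hz
      have e4 : b - a * x * b = 0 := by
        calc b - a * x * b = ((1 : R) - a * x) * b := by noncomm_ring
          _ = 0 := hz.symm
      exact (sub_eq_zero.mp e4)
    -- Step 3: ∀ s, a * (1 - x*b) * s * a = 0
    have h2 : ∀ s : R, a * ((1 : R) - x * b) * s * a = 0 := by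
      intro s
      have memb : b * (x + (1 - x * b) * s) * b = b := by
        have e1 : b * (x + (1 - x * b) * s) * b
            = b * x * b + (b - b * x * b) * s * b := by noncomm_ring
        rw [hb] at e1
        simpa using e1
      have hamem : a * (x + (1 - x * b) * s) * a = a := (key _).mpr memb
      have e2 : a * (x + (1 - x * b) * s) * a
          = a * x * a + a * ((1 : R) - x * b) * s * a := by noncomm_ring
      rw [hamem, hx] at e2
      exact (left_eq_add.mp e2)
    -- Step 4: a = a*x*b
    have ha_eq : a = a * x * b := by
      obtain ⟨z, hz⟩ := hreg (a * ((1 : R) - x * b))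
      have e3 : a * ((1 : R) - x * b) * z * (a * ((1 : R) - x * b))
          = (a * ((1 : R) - x * b) * z * a) * ((1 : R) - x * b) := by noncomm_ring
      rw [h2 z, zero_mul] at e3
      rw [e3] at hz
      have e4 : a - a * x * b = 0 := by
        calc a - a * x * b = a * ((1 : R) - x * b) := by noncomm_ring
          _ = 0 := hz.symm
      exact (sub_eq_zero.mp e4)
    rw [ha_eq, ← hb_eq]
  · rintro rfl; rfl
end

section
/- Let R be a ring with unity and a, b ∈ R regular elements such that I(a) = I(b) and a - b is regular. Then a = b. -/
theorem nielsen_remark {R : Type*} [Ring R]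
    (a b : R) (ha : ∃ x : R, a * x * a = a) (hb : ∃ x : R, b * x * b = b)
    (hd : ∃ x : R, (a - b) * x * (a - b) = a - b)
    (hI : {x : R | a * x * a = a} = {x : R | b * x * b = b}) : a = b := by
  obtain ⟨x, hax⟩ := ha
  obtain ⟨z, hz⟩ := hd
  have memA : ∀ y : R, a * y * a = a → b * y * b = b := by
    intro y hy
    have : y ∈ {t : R | a * t * a = a} := hy
    rw [hI] at this; exact this
  have memB : ∀ y : R, b * y * b = b → a * y * a = a := by
    intro y hy
    have : y ∈ {t : R | b * t * b = b} := hy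
    rw [← hI] at this; exact this
  have hbx : b * x * b = b := memA x hax
  have cancel : ∀ u v w : R, w + (u - v) = w → v = u := by
    intro u v w h
    have h' : w + (u - v) = w + 0 := by rw [add_zero]; exact h
    have := add_left_cancel h'
    exact (sub_eq_zero.mp this).symm
  -- L1 : ∀ t, a*t*(b*x*a) = a*t*a
  have L1 : ∀ t : R, a * t * (b * x * a) = a * t * a := by
    intro t
    have hy : b * (x + (t - t * (b * x))) * b = b := by
      have e : b * (x + (t - t * (b * x))) * b
          = b * x * b + (b * t * b - b * t * (b * x * b)) := by noncomm_ring
      rw [e, hbx]; simp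
    have h5 := memB _ hy
    have e2 : a * (x + (t - t * (b * x))) * a
        = a * x * a + (a * t * a - a * t * (b * x * a)) := by noncomm_ring
    rw [e2, hax] at h5
    exact cancel _ _ _ h5
  -- L2 : ∀ t, a*x*b*t*a = a*t*a
  have L2 : ∀ t : R, a * x * b * t * a = a * t * a := by
    intro t
    have hy : b * (x + (t - x * (b * t))) * b = b := by
      have e : b * (x + (t - x * (b * t))) * b
          = b * x * b + (b * t * b - b * (x * (b * t)) * b) := by noncomm_ring
      have e2 : b * (x * (b * t)) * b = b * x * b * t * b := by noncomm_ring
      rw [e, e2, hbx]; simp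
    have h5 := memB _ hy
    have e3 : a * (x + (t - x * (b * t))) * a
        = a * x * a + (a * t * a - a * x * b * t * a) := by noncomm_ring
    rw [e3, hax] at h5
    exact cancel _ _ _ h5
  -- L3 : ∀ t, b*t*(a*x*b) = b*t*b
  have L3 : ∀ t : R, b * t * (a * x * b) = b * t * b := by
    intro t
    have hy : a * (x + (t - t * (a * x))) * a = a := by
      have e : a * (x + (t - t * (a * x))) * a
          = a * x * a + (a * t * a - a * t * (a * x * a)) := by noncomm_ring
      rw [e, hax]; simp
    have h5 := memA _ hy
    have e2 : b * (x + (t - t * (a * x))) * b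
        = b * x * b + (b * t * b - b * t * (a * x * b)) := by noncomm_ring
    rw [e2, hbx] at h5
    exact cancel _ _ _ h5
  -- L4 : ∀ t, b*x*a*t*b = b*t*b
  have L4 : ∀ t : R, b * x * a * t * b = b * t * b := by
    intro t
    have hy : a * (x + (t - x * (a * t))) * a = a := by
      have e : a * (x + (t - x * (a * t))) * a
          = a * x * a + (a * t * a - a * x * a * t * a) := by noncomm_ring
      rw [e, hax]; simp
    have h5 := memA _ hy
    have e2 : b * (x + (t - x * (a * t))) * b
        = b * x * b + (b * t * b - b * x * a * t * b) := by noncomm_ring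
    rw [e2, hbx] at h5
    exact cancel _ _ _ h5
  have habxa : a * x * b * x * a = a := by
    have := L2 x; rwa [hax] at this
  have hbxab : b * x * a * x * b = b := by
    have := L4 x; rwa [hbx] at this
  -- monomial identities
  have h1 : ∀ t : R, a * t * (a * x * b) = a * t * b := by
    intro t
    calc a * t * (a * x * b) = a * t * a * x * b := by noncomm_ring
      _ = a * t * (b * x * a) * x * b := by rw [L1]
      _ = a * t * (b * x * a * x * b) := by noncomm_ring
      _ = a * t * b := by rw [hbxab]
  have h2 : ∀ t : R, b * x * a * t * a = b * t * a := by
    intro t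
    calc b * x * a * t * a = b * x * (a * t * a) := by noncomm_ring
      _ = b * x * (a * x * b * t * a) := by rw [L2]
      _ = b * x * a * x * b * t * a := by noncomm_ring
      _ = b * t * a := by rw [hbxab]
  have h3 : ∀ t : R, b * t * (b * x * a) = b * t * a := by
    intro t
    calc b * t * (b * x * a) = b * t * b * x * a := by noncomm_ring
      _ = b * t * (a * x * b) * x * a := by rw [L3]
      _ = b * t * (a * x * b * x * a) := by noncomm_ring
      _ = b * t * a := by rw [habxa]
  have h4 : ∀ t : R, a * x * b * t * b = a * t * b := by
    intro t
    calc a * x * b * t * b = a * x * (b * t * b) := by noncomm_ring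
      _ = a * x * (b * x * a * t * b) := by rw [L4]
      _ = a * x * b * x * a * t * b := by noncomm_ring
      _ = a * t * b := by rw [habxa]
  -- D := a - a*x*b - b*x*a + b satisfies a t D = b t D = D t a = D t b = 0
  have haD : ∀ t : R, a * t * (a - a * x * b - b * x * a + b) = 0 := by
    intro t
    have e : a * t * (a - a * x * b - b * x * a + b)
        = a * t * a - a * t * (a * x * b) - a * t * (b * x * a) + a * t * b := by
      noncomm_ring
    rw [e, h1, ← L1]
    noncomm_ring
  have hbD : ∀ t : R, b * t * (a - a * x * b - b * x * a + b) = 0 := by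
    intro t
    have e : b * t * (a - a * x * b - b * x * a + b)
        = b * t * a - b * t * (a * x * b) - b * t * (b * x * a) + b * t * b := by
      noncomm_ring
    rw [e, h3, L3]
    noncomm_ring
  have hDa : ∀ t : R, (a - a * x * b - b * x * a + b) * t * a = 0 := by
    intro t
    have e : (a - a * x * b - b * x * a + b) * t * a
        = a * t * a - a * x * b * t * a - b * x * a * t * a + b * t * a := by
      noncomm_ring
    rw [e, h2, L2]
    noncomm_ring
  have hDb : ∀ t : R, (a - a * x * b - b * x * a + b) * t * b = 0 := by
    intro t
    have e : (a - a * x * b - b * x * a + b) * t * b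
        = a * t * b - a * x * b * t * b - b * x * a * t * b + b * t * b := by
      noncomm_ring
    rw [e, h4, L4]
    noncomm_ring
  have hDd : ∀ t : R, (a - a * x * b - b * x * a + b) * t * (a - b) = 0 := by
    intro t
    have e : (a - a * x * b - b * x * a + b) * t * (a - b)
        = (a - a * x * b - b * x * a + b) * t * a
          - (a - a * x * b - b * x * a + b) * t * b := by noncomm_ring
    rw [e, hDa, hDb, sub_zero]
  have hdD : ∀ t : R, (a - b) * t * (a - a * x * b - b * x * a + b) = 0 := by
    intro t
    have e : (a - b) * t * (a - a * x * b - b * x * a + b)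
        = a * t * (a - a * x * b - b * x * a + b)
          - b * t * (a - a * x * b - b * x * a + b) := by noncomm_ring
    rw [e, haD, hbD, sub_zero]
  have hDeq : (a - b) * x * (a - b) = a - a * x * b - b * x * a + b := by
    have e : (a - b) * x * (a - b)
        = a * x * a - a * x * b - b * x * a + b * x * b := by noncomm_ring
    rw [e, hax, hbx]
  have hD0 : a - a * x * b - b * x * a + b = 0 := by
    calc a - a * x * b - b * x * a + b = (a - b) * x * (a - b) := hDeq.symm
      _ = ((a - b) * z * (a - b)) * x * ((a - b) * z * (a - b)) := by rw [hz]
      _ = (a - b) * z * (((a - b) * x * (a - b)) * z * (a - b)) := by noncomm_ring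
      _ = (a - b) * z * ((a - a * x * b - b * x * a + b) * z * (a - b)) := by
          rw [hDeq]
      _ = (a - b) * z * 0 := by rw [hDd z]
      _ = 0 := by rw [mul_zero]
  -- a + b = a*x*b + b*x*a
  have hstar : a - a * x * b = b * x * a - b := by
    have : (a - a * x * b) - (b * x * a - b) = a - a * x * b - b * x * a + b := by
      noncomm_ring
    rw [← sub_eq_zero, this, hD0]
  have hstar' : a - b * x * a = a * x * b - b := by
    have : (a - b * x * a) - (a * x * b - b) = a - a * x * b - b * x * a + b := by
      noncomm_ring
    rw [← sub_eq_zero, this, hD0]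
  -- s := a - a*x*b vanishes
  have hsda : ∀ t : R, (a - a * x * b) * t * a = 0 := by
    intro t
    have e : (a - a * x * b) * t * a = a * t * a - a * x * b * t * a := by
      noncomm_ring
    rw [e, L2, sub_self]
  have hsdb : ∀ t : R, (a - a * x * b) * t * b = 0 := by
    intro t
    rw [hstar]
    have e : (b * x * a - b) * t * b = b * x * a * t * b - b * t * b := by
      noncomm_ring
    rw [e, L4, sub_self]
  have haxb : a - a * x * b = 0 := by
    have e1 : a - a * x * b = a * x * (a - b) := by
      have : a * x * (a - b) = a * x * a - a * x * b := by noncomm_ring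
      rw [this, hax]
    calc a - a * x * b = a * x * (a - b) := e1
      _ = a * x * ((a - b) * z * (a - b)) := by rw [hz]
      _ = (a * x * (a - b)) * z * (a - b) := by noncomm_ring
      _ = (a - a * x * b) * z * (a - b) := by rw [← e1]
      _ = (a - a * x * b) * z * a - (a - a * x * b) * z * b := by noncomm_ring
      _ = 0 := by rw [hsda, hsdb, sub_zero]
  -- r := a - b*x*a vanishes
  have hrda : ∀ t : R, a * t * (a - b * x * a) = 0 := by
    intro t
    have e : a * t * (a - b * x * a) = a * t * a - a * t * (b * x * a) := by
      noncomm_ring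
    rw [e, L1, sub_self]
  have hrdb : ∀ t : R, b * t * (a - b * x * a) = 0 := by
    intro t
    rw [hstar']
    have e : b * t * (a * x * b - b) = b * t * (a * x * b) - b * t * b := by
      noncomm_ring
    rw [e, L3, sub_self]
  have hbxa : a - b * x * a = 0 := by
    have e1 : a - b * x * a = (a - b) * x * a := by
      have : (a - b) * x * a = a * x * a - b * x * a := by noncomm_ring
      rw [this, hax]
    calc a - b * x * a = (a - b) * x * a := e1
      _ = ((a - b) * z * (a - b)) * x * a := by rw [hz]
      _ = (a - b) * z * ((a - b) * x * a) := by noncomm_ring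
      _ = (a - b) * z * (a - b * x * a) := by rw [← e1]
      _ = a * z * (a - b * x * a) - b * z * (a - b * x * a) := by noncomm_ring
      _ = 0 := by rw [hrda, hrdb, sub_zero]
  -- conclude
  have h6 : a * x * b = a := (sub_eq_zero.mp haxb).symm
  have h7 : b * x * a = a := (sub_eq_zero.mp hbxa).symm
  have := hstar
  rw [h6, h7, sub_self] at this
  -- this : 0 = a - b
  exact (sub_eq_zero.mp this.symm)
end

section
/- Let R be a semiprime ring with unity and a, b regular elements of R. Then Ref(a) = Ref(b) if and only if a = b. -/
theorem reflexive_inv_determines {R : Type*} [Ring R]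
    (hsp : ∀ x : R, (∀ r : R, x * r * x = 0) → x = 0)
    (a b : R) (ha : ∃ x : R, a * x * a = a) (hb : ∃ x : R, b * x * b = b) :
    {x : R | a * x * a = a ∧ x * a * x = x} = {x : R | b * x * b = b ∧ x * b * x = x} ↔
      a = b := by
  constructor
  · intro h
    obtain ⟨x, haxa, hxax⟩ : ∃ x : R, a * x * a = a ∧ x * a * x = x := by
      obtain ⟨x0, hx0⟩ := ha
      refine ⟨x0 * a * x0, ?_, ?_⟩
      · have e : a * (x0 * a * x0) * a = (a * x0 * a) * x0 * a := by noncomm_ring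
        rw [e, hx0, hx0]
      · have e : (x0 * a * x0) * a * (x0 * a * x0) =
            x0 * (a * x0 * a) * x0 * (a * x0) := by noncomm_ring
        have e2 : x0 * a * x0 * (a * x0) = x0 * (a * x0 * a) * x0 := by noncomm_ring
        rw [e, hx0, e2, hx0]
    have hmem : ∀ y : R, (a * y * a = a ∧ y * a * y = y) ↔
        (b * y * b = b ∧ y * b * y = y) := fun y => Set.ext_iff.mp h y
    obtain ⟨hbxb, hxbx⟩ := (hmem x).mp ⟨haxa, hxax⟩
    -- key vanishing facts
    have hk1 : x * a * (1 - x * a) = 0 := by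
      have e : x * a * (1 - x * a) = x * a - (x * a * x) * a := by noncomm_ring
      rw [e, hxax, sub_self]
    have hk2 : (1 - a * x) * a = 0 := by
      have e : (1 - a * x) * a = a - a * x * a := by noncomm_ring
      rw [e, haxa, sub_self]
    -- family 1 : x + (1 - x*a)*z*x is a reflexive inverse of a
    have fam1 : ∀ z : R, a * (x + (1 - x * a) * z * x) * a = a ∧
        (x + (1 - x * a) * z * x) * a * (x + (1 - x * a) * z * x)
          = x + (1 - x * a) * z * x := by
      intro z
      constructor
      · have e : a * (x + (1 - x * a) * z * x) * a
            = a * x * a + (a - a * x * a) * (z * (x * a)) := by noncomm_ring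
        rw [e, haxa, sub_self, zero_mul, add_zero]
      · have e : (x + (1 - x * a) * z * x) * a * (x + (1 - x * a) * z * x)
            = x * a * x + (x * a * (1 - x * a)) * (z * x)
              + (1 - x * a) * z * (x * a * x)
              + ((1 - x * a) * z) * ((x * a * (1 - x * a)) * (z * x)) := by
          noncomm_ring
        rw [e, hxax, hk1, zero_mul, mul_zero, add_zero, add_zero]
    -- family 2 : x + x*z*(1 - a*x) is a reflexive inverse of a
    have fam2 : ∀ z : R, a * (x + x * z * (1 - a * x)) * a = a ∧
        (x + x * z * (1 - a * x)) * a * (x + x * z * (1 - a * x))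
          = x + x * z * (1 - a * x) := by
      intro z
      constructor
      · have e : a * (x + x * z * (1 - a * x)) * a
            = a * x * a + (a * x * z) * ((1 - a * x) * a) := by noncomm_ring
        rw [e, haxa, hk2, mul_zero, add_zero]
      · have e : (x + x * z * (1 - a * x)) * a * (x + x * z * (1 - a * x))
            = x * a * x + (x * a * x) * (z * (1 - a * x))
              + (x * z) * (((1 - a * x) * a) * x)
              + (x * z) * (((1 - a * x) * a) * (x * z * (1 - a * x))) := by
          noncomm_ring
        rw [e, hxax, hk2]
        noncomm_ring
    -- transfer to b
    have hz1 : ∀ z : R, b * ((1 - x * a) * z * x) * b = 0 := by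
      intro z
      have hyb := ((hmem _).mp (fam1 z)).1
      have e : b * (x + (1 - x * a) * z * x) * b
          = b * x * b + b * ((1 - x * a) * z * x) * b := by noncomm_ring
      rw [e, hbxb] at hyb
      exact (add_eq_left).mp hyb
    have hz2 : ∀ z : R, b * (x * z * (1 - a * x)) * b = 0 := by
      intro z
      have hyb := ((hmem _).mp (fam2 z)).1
      have e : b * (x + x * z * (1 - a * x)) * b
          = b * x * b + b * (x * z * (1 - a * x)) * b := by noncomm_ring
      rw [e, hbxb] at hyb
      exact (add_eq_left).mp hyb
    -- e = x*b*(1 - x*a) vanishes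
    have he : x * b * (1 - x * a) = 0 := by
      apply hsp
      intro r
      have e : x * b * (1 - x * a) * r * (x * b * (1 - x * a))
          = x * (b * ((1 - x * a) * r * x) * b) * (1 - x * a) := by noncomm_ring
      rw [e, hz1, mul_zero, zero_mul]
    have hf : (1 - a * x) * b * x = 0 := by
      apply hsp
      intro r
      have e : (1 - a * x) * b * x * r * ((1 - a * x) * b * x)
          = (1 - a * x) * (b * (x * r * (1 - a * x)) * b) * x := by noncomm_ring
      rw [e, hz2, mul_zero, zero_mul]
    -- conclude xb = xa and bx = ax
    have hxb : x * b = x * a := by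
      have e : x * b * (1 - x * a) = x * b - (x * b * x) * a := by noncomm_ring
      rw [e, hxbx, sub_eq_zero] at he
      exact he
    have hbx : b * x = a * x := by
      have e : (1 - a * x) * b * x = b * x - a * (x * b * x) := by noncomm_ring
      rw [e, hxbx, sub_eq_zero] at hf
      exact hf
    have hba : b = a := by
      calc b = b * x * b := hbxb.symm
        _ = a * x * b := by rw [hbx]
        _ = a * (x * b) := by rw [mul_assoc]
        _ = a * (x * a) := by rw [hxb]
        _ = a := by rw [← mul_assoc, haxa]
    exact hba.symm
  · rintro rfl
    rfl
end

section
/- Let R be a semiprime ring with unity, a, b regular elements with Ref(a) = Ref(b), and a₀ ∈ Ref(a). Then b·(1 - a₀·a) = 0 and (1 - a·a₀)·b = 0; consequently R·a = R·b and a·R = b·R. -/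
private lemma ref_L1 {R : Type*} [Ring R]
    (hsp : ∀ x : R, (∀ r : R, x * r * x = 0) → x = 0)
    (a b x : R)
    (hmem : ∀ y : R, a * y * a = a ∧ y * a * y = y → b * y * b = b ∧ y * b * y = y)
    (hx1 : a * x * a = a) (hx2 : x * a * x = x) : b * (1 - x * a) = 0 := by
  have hbx : b * x * b = b := (hmem x ⟨hx1, hx2⟩).1
  set u : R := 1 - x * a with hu
  have h0 : a * u = 0 := by
    rw [hu, mul_sub, mul_one, ← mul_assoc, hx1, sub_self]
  have hkey : ∀ t : R, b * u * t * (x * b) = 0 := by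
    intro t
    set y : R := x + u * t * x with hy
    have hay : a * y = a * x := by
      rw [hy, mul_add]
      have : a * (u * t * x) = 0 := by
        rw [← mul_assoc, ← mul_assoc, h0, zero_mul, zero_mul]
      rw [this, add_zero]
    have hy1 : a * y * a = a := by rw [hay, hx1]
    have hy2 : y * a * y = y := by
      rw [mul_assoc, hay]
      have hxax : x * (a * x) = x := by rw [← mul_assoc, hx2]
      rw [hy, add_mul, hxax, mul_assoc (u * t), hxax]
    have hby : b * y * b = b := (hmem y ⟨hy1, hy2⟩).1
    have hexp : b * y * b = b + b * u * t * (x * b) := by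
      rw [hy, mul_add, add_mul, hbx]
      congr 1
      simp only [mul_assoc]
    rw [hexp] at hby
    exact (add_eq_left).mp hby
  apply hsp
  intro r
  have h1 : b * u * r * b = 0 := by
    have h := hkey (r * b)
    rw [show b * u * (r * b) * (x * b) = b * u * r * (b * x * b) from by
      simp only [mul_assoc], hbx] at h
    exact h
  calc b * u * r * (b * u) = (b * u * r * b) * u := by simp only [mul_assoc]
    _ = 0 := by rw [h1, zero_mul]

private lemma ref_L2 {R : Type*} [Ring R]
    (hsp : ∀ x : R, (∀ r : R, x * r * x = 0) → x = 0)
    (a b x : R)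
    (hmem : ∀ y : R, a * y * a = a ∧ y * a * y = y → b * y * b = b ∧ y * b * y = y)
    (hx1 : a * x * a = a) (hx2 : x * a * x = x) : (1 - a * x) * b = 0 := by
  have hbx : b * x * b = b := (hmem x ⟨hx1, hx2⟩).1
  set u : R := 1 - a * x with hu
  have h0 : u * a = 0 := by
    rw [hu, sub_mul, one_mul, mul_assoc, ← mul_assoc, hx1, sub_self]
  have hkey : ∀ t : R, b * x * t * (u * b) = 0 := by
    intro t
    set y : R := x + x * t * u with hy
    have hya : y * a = x * a := by
      rw [hy, add_mul]
      have : x * t * u * a = 0 := by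
        rw [mul_assoc, h0, mul_zero]
      rw [this, add_zero]
    have hy1 : a * y * a = a := by rw [mul_assoc, hya, ← mul_assoc, hx1]
    have hy2 : y * a * y = y := by
      rw [hya]
      have h3 : x * a * (x * t * u) = x * t * u := by
        rw [show x * a * (x * t * u) = x * a * x * (t * u) from by
          simp only [mul_assoc], hx2, mul_assoc]
      rw [hy, mul_add, hx2, h3]
    have hby : b * y * b = b := (hmem y ⟨hy1, hy2⟩).1
    have hexp : b * y * b = b + b * x * t * (u * b) := by
      rw [hy, mul_add, add_mul, hbx]
      congr 1
      simp only [mul_assoc]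
    rw [hexp] at hby
    exact (add_eq_left).mp hby
  apply hsp
  intro r
  have h1 : b * r * (u * b) = 0 := by
    have h := hkey (b * r)
    rw [show b * x * (b * r) * (u * b) = b * x * b * (r * (u * b)) from by
      simp only [mul_assoc], hbx, ← mul_assoc] at h
    exact h
  calc (u * b) * r * (u * b) = u * (b * r * (u * b)) := by simp only [mul_assoc]
    _ = 0 := by rw [h1, mul_zero]

theorem ref_eq_gives_ideals {R : Type*} [Ring R]
    (hsp : ∀ x : R, (∀ r : R, x * r * x = 0) → x = 0)
    (a b : R) (ha : ∃ x : R, a * x * a = a) (hb : ∃ x : R, b * x * b = b)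
    (hR : {x : R | a * x * a = a ∧ x * a * x = x} = {x : R | b * x * b = b ∧ x * b * x = x})
    (a₀ : R) (ha₀ : a * a₀ * a = a ∧ a₀ * a * a₀ = a₀) :
    b * (1 - a₀ * a) = 0 ∧ (1 - a * a₀) * b = 0 ∧
      {z : R | ∃ r : R, z = r * a} = {z : R | ∃ r : R, z = r * b} ∧
      {z : R | ∃ r : R, z = a * r} = {z : R | ∃ r : R, z = b * r} := by
  have hmem : ∀ y : R, a * y * a = a ∧ y * a * y = y → b * y * b = b ∧ y * b * y = y := by
    intro y hy
    exact (Set.ext_iff.mp hR y).mp hy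
  have hmem' : ∀ y : R, b * y * b = b ∧ y * b * y = y → a * y * a = a ∧ y * a * y = y := by
    intro y hy
    exact (Set.ext_iff.mp hR y).mpr hy
  -- first two claims
  have H1 : b * (1 - a₀ * a) = 0 := ref_L1 hsp a b a₀ hmem ha₀.1 ha₀.2
  have H2 : (1 - a * a₀) * b = 0 := ref_L2 hsp a b a₀ hmem ha₀.1 ha₀.2
  -- a reflexive inverse of b
  obtain ⟨c, hc⟩ := hb
  set b₀ : R := c * b * c with hb₀
  have hcb : b * (c * b) = b := by rw [← mul_assoc, hc]
  have hbb1 : b * b₀ * b = b := by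
    have : b * (c * b * c) * b = b * (c * (b * (c * b))) := by simp only [mul_assoc]
    rw [hb₀, this, hcb, hcb]
  have hbb2 : b₀ * b * b₀ = b₀ := by
    have : c * b * c * b * (c * b * c) = c * (b * (c * (b * (c * (b * c))))) := by
      simp only [mul_assoc]
    rw [hb₀, this]
    have h1 : b * (c * (b * c)) = b * c := by rw [← mul_assoc, ← mul_assoc, hc]
    have h2 : b * (c * (b * (c * (b * c)))) = b * c := by
      rw [show b * (c * (b * (c * (b * c)))) = b * (c * b) * (c * (b * c)) from by
        simp only [mul_assoc], hcb, h1]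
    rw [h2, ← mul_assoc]
  have H3 : a * (1 - b₀ * b) = 0 := ref_L1 hsp b a b₀ hmem' hbb1 hbb2
  have H4 : (1 - b * b₀) * a = 0 := ref_L2 hsp b a b₀ hmem' hbb1 hbb2
  -- turn zeros into equations
  have hbeq : b * (a₀ * a) = b := by
    have := H1
    rw [mul_sub, mul_one, sub_eq_zero] at this
    exact this.symm
  have hbeq' : a * (a₀ * b) = b := by
    have := H2
    rw [sub_mul, one_mul, sub_eq_zero, mul_assoc] at this
    exact this.symm
  have haeq : a * (b₀ * b) = a := by
    have := H3
    rw [mul_sub, mul_one, sub_eq_zero] at this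
    exact this.symm
  have haeq' : b * (b₀ * a) = a := by
    have := H4
    rw [sub_mul, one_mul, sub_eq_zero, mul_assoc] at this
    exact this.symm
  refine ⟨H1, H2, ?_, ?_⟩
  · ext z
    simp only [Set.mem_setOf_eq]
    constructor
    · rintro ⟨r, rfl⟩
      exact ⟨r * (a * b₀), by rw [mul_assoc, mul_assoc, haeq]⟩
    · rintro ⟨r, rfl⟩
      exact ⟨r * (b * a₀), by rw [mul_assoc, mul_assoc, hbeq]⟩
  · ext z
    simp only [Set.mem_setOf_eq]
    constructor
    · rintro ⟨r, rfl⟩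
      exact ⟨b₀ * (a * r), by
        rw [show b * (b₀ * (a * r)) = b * (b₀ * a) * r from by
          simp only [mul_assoc], haeq']⟩
    · rintro ⟨r, rfl⟩
      exact ⟨a₀ * (b * r), by
        rw [show a * (a₀ * (b * r)) = a * (a₀ * b) * r from by
          simp only [mul_assoc], hbeq']⟩
end

section
/- Let R be a semiprime ring with unity and a, b regular elements of R. The following are equivalent: (1) I(a) = I(b); (2) a = b; (3) Ref(a) = Ref(b). -/
private lemma inner_one {R : Type*} [Ring R]
    (hsp : ∀ x : R, (∀ r : R, x * r * x = 0) → x = 0)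
    (a b x : R) (hax : a * x * a = a) (hbx : b * x * b = b)
    (K : ∀ z : R, a * z * a = 0 → b * z * b = 0) :
    b = a * x * b ∧ b = b * x * a := by
  have F1 : ∀ r : R, b * ((1 - x * a) * r * (1 - a * x)) * b = 0 := by
    intro r
    refine K _ ?_
    have h : a * ((1 - x * a) * r * (1 - a * x)) * a
        = (a - a * x * a) * (r * (a - a * x * a)) := by noncomm_ring
    rw [h, hax, sub_self, zero_mul]
  have F2 : ∀ s : R, b * (x * s * (1 - a * x)) * b = 0 := by
    intro s
    refine K _ ?_
    have h : a * (x * s * (1 - a * x)) * a = a * x * (s * (a - a * x * a)) := by noncomm_ring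
    rw [h, hax, sub_self, mul_zero, mul_zero]
  have F3 : ∀ s : R, b * ((1 - x * a) * s * x) * b = 0 := by
    intro s
    refine K _ ?_
    have h : a * ((1 - x * a) * s * x) * a = (a - a * x * a) * (s * (x * a)) := by noncomm_ring
    rw [h, hax, sub_self, zero_mul]
  have hbrq : ∀ r : R, b * r * ((1 - a * x) * b) = 0 := by
    intro r
    have h : b * r * ((1 - a * x) * b)
        = b * ((1 - x * a) * r * (1 - a * x)) * b + b * (x * (a * r) * (1 - a * x)) * b := by
      noncomm_ring
    rw [h, F1, F2, add_zero]
  have hq : (1 - a * x) * b = 0 := by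
    refine hsp _ fun r => ?_
    have h : (1 - a * x) * b * r * ((1 - a * x) * b)
        = b * r * ((1 - a * x) * b) - a * (x * (b * r * ((1 - a * x) * b))) := by noncomm_ring
    rw [h, hbrq, mul_zero, mul_zero, sub_zero]
  have hb1 : b = a * x * b := by
    have h : b - a * x * b = (1 - a * x) * b := by noncomm_ring
    exact sub_eq_zero.mp (h.trans hq)
  have hprb : ∀ r : R, b * (1 - x * a) * r * b = 0 := by
    intro r
    have h : b * (1 - x * a) * r * b
        = b * ((1 - x * a) * (r * a) * x) * b + b * (1 - x * a) * r * ((1 - a * x) * b) := by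
      noncomm_ring
    rw [h, F3, hq, mul_zero, add_zero]
  have hp : b * (1 - x * a) = 0 := by
    refine hsp _ fun r => ?_
    have h : b * (1 - x * a) * r * (b * (1 - x * a))
        = b * (1 - x * a) * r * b * (1 - x * a) := by noncomm_ring
    rw [h, hprb, zero_mul]
  have hb2 : b = b * x * a := by
    have h : b - b * x * a = b * (1 - x * a) := by noncomm_ring
    exact sub_eq_zero.mp (h.trans hp)
  exact ⟨hb1, hb2⟩

private lemma inner_eq {R : Type*} [Ring R]
    (hsp : ∀ x : R, (∀ r : R, x * r * x = 0) → x = 0)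
    (a b : R) (ha : ∃ x : R, a * x * a = a)
    (h : ∀ t : R, a * t * a = a ↔ b * t * b = b) : a = b := by
  obtain ⟨x, hax⟩ := ha
  have hbx : b * x * b = b := (h x).mp hax
  have K : ∀ z : R, a * z * a = 0 → b * z * b = 0 := by
    intro z hz
    have e : a * (x + z) * a = a * x * a + a * z * a := by noncomm_ring
    have h1 : a * (x + z) * a = a := by rw [e, hax, hz, add_zero]
    have h2 := (h _).mp h1
    have e2 : b * (x + z) * b = b * x * b + b * z * b := by noncomm_ring
    rw [e2, hbx] at h2
    exact add_eq_left.mp h2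
  have K' : ∀ z : R, b * z * b = 0 → a * z * a = 0 := by
    intro z hz
    have e : b * (x + z) * b = b * x * b + b * z * b := by noncomm_ring
    have h1 : b * (x + z) * b = b := by rw [e, hbx, hz, add_zero]
    have h2 := (h _).mpr h1
    have e2 : a * (x + z) * a = a * x * a + a * z * a := by noncomm_ring
    rw [e2, hax] at h2
    exact add_eq_left.mp h2
  have h1 := inner_one hsp a b x hax hbx K
  have h2 := inner_one hsp b a x hbx hax K'
  exact h2.2.trans h1.1.symm

private lemma ref_one {R : Type*} [Ring R]
    (hsp : ∀ x : R, (∀ r : R, x * r * x = 0) → x = 0)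
    (a b y : R) (hy1 : a * y * a = a) (hy2 : y * a * y = y)
    (href : ∀ w : R, (a * w * a = a ∧ w * a * w = w) → (b * w * b = b ∧ w * b * w = w)) :
    a = b := by
  obtain ⟨hyb, hyby⟩ := href y ⟨hy1, hy2⟩
  obtain ⟨n, hn⟩ : ∃ n : R, n = 1 - y * a := ⟨_, rfl⟩
  obtain ⟨m, hm⟩ : ∃ m : R, m = 1 - a * y := ⟨_, rfl⟩
  have han : a * n = 0 := by
    have e : a * (1 - y * a) = a - a * y * a := by noncomm_ring
    rw [hn, e, hy1, sub_self]
  have hma : m * a = 0 := by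
    have e : (1 - a * y) * a = a - a * y * a := by noncomm_ring
    rw [hm, e, hy1, sub_self]
  have hw : ∀ u v : R, b * ((1 + n * u * a) * y * (1 + a * v * m)) * b = b := by
    intro u v
    refine (href _ ⟨?_, ?_⟩).1
    · have e : a * ((1 + n * u * a) * y * (1 + a * v * m)) * a
          = (a + a * n * (u * a)) * y * (a + a * v * (m * a)) := by noncomm_ring
      rw [e, han, hma]
      simp only [zero_mul, mul_zero, add_zero]
      exact hy1
    · have mid : (1 + a * v * m) * a * (1 + n * u * a)
          = a + a * v * (m * a) + a * n * (u * a) + a * v * (m * a * (n * (u * a))) := by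
        noncomm_ring
      rw [han, hma] at mid
      simp only [mul_zero, zero_mul, add_zero] at mid
      have e : (1 + n * u * a) * y * (1 + a * v * m) * a * ((1 + n * u * a) * y * (1 + a * v * m))
          = (1 + n * u * a) * (y * ((1 + a * v * m) * a * (1 + n * u * a)) * y)
            * (1 + a * v * m) := by noncomm_ring
      rw [e, mid, hy2]
  have G1 : ∀ u : R, b * n * u * (a * (y * b)) = 0 := by
    intro u
    have e0 := hw u 0
    have e : b * ((1 + n * u * a) * y * (1 + a * 0 * m)) * b
        = b * y * b + b * n * u * (a * (y * b)) := by noncomm_ring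
    rw [e, hyb] at e0
    exact add_eq_left.mp e0
  have G2 : ∀ v : R, b * (y * a) * v * (m * b) = 0 := by
    intro v
    have e0 := hw 0 v
    have e : b * ((1 + n * 0 * a) * y * (1 + a * v * m)) * b
        = b * y * b + b * (y * a) * v * (m * b) := by noncomm_ring
    rw [e, hyb] at e0
    exact add_eq_left.mp e0
  have G5 : ∀ u v : R, b * n * u * (a * (v * (m * b))) = 0 := by
    intro u v
    have e0 := hw u v
    have e : b * ((1 + n * u * a) * y * (1 + a * v * m)) * b
        = b * y * b + b * n * u * (a * (y * b)) + b * (y * a) * v * (m * b)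
          + b * n * u * (a * y * a * (v * (m * b))) := by noncomm_ring
    rw [e, hy1, hyb, G1 u, G2 v, add_zero, add_zero] at e0
    exact add_eq_left.mp e0
  have h1' : ∀ u v : R, b * n * u * (a * (v * b)) = 0 := by
    intro u v
    have e : b * n * u * (a * (v * b))
        = b * n * u * (a * (v * (m * b))) + b * n * (u * (a * v)) * (a * (y * b)) := by
      rw [hm]; noncomm_ring
    rw [e, G5, G1, add_zero]
  have h1 : ∀ r v : R, b * r * (a * (v * (m * b))) = 0 := by
    intro r v
    have e : b * r * (a * (v * (m * b)))
        = b * n * r * (a * (v * (m * b))) + b * (y * a) * (r * (a * v)) * (m * b) := by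
      rw [hn]; noncomm_ring
    rw [e, G5, G2, add_zero]
  have hA : ∀ s r : R, m * b * s * (b * (r * a)) = 0 := by
    intro s r
    refine hsp _ fun t => ?_
    have e : m * b * s * (b * (r * a)) * t * (m * b * s * (b * (r * a)))
        = m * b * s * (b * r * (a * (t * (m * b))) * (s * (b * (r * a)))) := by noncomm_ring
    rw [e, h1, zero_mul, mul_zero]
  have h4 : ∀ r : R, m * (b * (r * a)) = 0 := by
    intro r
    have e : m * (b * y * b * (r * a)) = m * b * y * (b * (r * a)) := by noncomm_ring
    rw [hyb] at e
    rw [e]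
    exact hA y r
  have hB : ∀ v s : R, a * v * b * s * (b * n) = 0 := by
    intro v s
    refine hsp _ fun t => ?_
    have e : a * v * b * s * (b * n) * t * (a * v * b * s * (b * n))
        = a * v * b * s * (b * n * t * (a * (v * b)) * (s * (b * n))) := by noncomm_ring
    rw [e, h1', zero_mul, mul_zero]
  have h5 : ∀ v : R, a * (v * (b * n)) = 0 := by
    intro v
    have e : a * (v * (b * y * b * n)) = a * v * b * y * (b * n) := by noncomm_ring
    rw [hyb] at e
    rw [e]
    exact hB v y
  have e1 : a * y * b = a := by
    have e : a * (y * (b * n)) = a * y * b - a * (y * b * y) * a := by rw [hn]; noncomm_ring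
    have e0 := h5 y
    rw [e, hyby, hy1] at e0
    exact sub_eq_zero.mp e0
  have e2 : b * y * a = a := by
    have e : m * (b * (y * a)) = b * y * a - a * y * b * (y * a) := by rw [hm]; noncomm_ring
    have e0 := h4 y
    rw [e, e1, ← mul_assoc, hy1] at e0
    exact sub_eq_zero.mp e0
  have e3 : b * y * a * (y * b) = b * (y * a * y) * b := by noncomm_ring
  rw [e2, hy2, hyb] at e3
  rw [← mul_assoc, e1] at e3
  exact e3

theorem main_tfae {R : Type*} [Ring R]
    (hsp : ∀ x : R, (∀ r : R, x * r * x = 0) → x = 0)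
    (a b : R) (ha : ∃ x : R, a * x * a = a) (hb : ∃ x : R, b * x * b = b) :
    List.TFAE
      [ {x : R | a * x * a = a} = {x : R | b * x * b = b},
        a = b,
        {x : R | a * x * a = a ∧ x * a * x = x} =
          {x : R | b * x * b = b ∧ x * b * x = x} ] := by
  tfae_have 1 → 2 := by
    intro h
    exact inner_eq hsp a b ha (fun t => Set.ext_iff.mp h t)
  tfae_have 2 → 3 := by rintro rfl; rfl
  tfae_have 3 → 2 := by
    intro h
    obtain ⟨x, hax⟩ := ha
    have hy1 : a * (x * a * x) * a = a := by
      have e : a * (x * a * x) * a = a * x * a * (x * a) := by noncomm_ring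
      rw [e, hax, ← mul_assoc, hax]
    have hy2 : (x * a * x) * a * (x * a * x) = x * a * x := by
      have e : (x * a * x) * a * (x * a * x) = x * (a * x * a * (x * (a * x))) := by noncomm_ring
      rw [e, hax]
      have e2 : x * (a * (x * (a * x))) = x * (a * x * a * x) := by noncomm_ring
      rw [e2, hax, ← mul_assoc]
    exact ref_one hsp a b (x * a * x) hy1 hy2 (fun w hw => (Set.ext_iff.mp h w).mp hw)
  tfae_have 2 → 1 := by rintro rfl; rfl
  tfae_finish
end
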